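/- Let (τ_i)_{i≥1} be nonnegative i.i.d. random variables. For any reals α > 0, β > 0 and integers L ≥ K ≥ 1 satisfying βK ≤ αL: E[(min_{1≤i≤L} τ_i)^β] ≤ 1 + (β/α) · E[(min_{1≤i≤K} τ_i)^α]^{L/K}. -/

import Mathlib

open MeasureTheory ProbabilityTheory Filter ENNReal

noncomputable section

namespace FPP

/-- Vertices of the `d`-dimensional integer lattice. -/
abbrev V (d : ℕ) := Fin d → ℤ

/-- ℓ¹-distance on the lattice. -/
def dist1 {d : ℕ} (x y : V d) : ℕ := ∑ i, (x i - y i).natAbs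

/-- ℓ¹-norm on the lattice. -/
def norm1 {d : ℕ} (x : V d) : ℕ := ∑ i, (x i).natAbs

lemma dist1_symm {d : ℕ} (x y : V d) : dist1 x y = dist1 y x :=
  Finset.sum_congr rfl fun i _ => by omega

/-- The set of nearest-neighbour edges of the lattice, as unordered pairs of vertices. -/
def EdgeSet (d : ℕ) : Set (Sym2 (V d)) :=
  Sym2.fromRel (r := fun x y => dist1 x y = 1) ⟨fun _ _ h => by rwa [dist1_symm]⟩

/-- A lattice path: consecutive vertices are at ℓ¹-distance one. -/
def IsLatticePath {d : ℕ} (p : List (V d)) : Prop :=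
  p.Chain' fun a b => dist1 a b = 1

variable {d : ℕ} {Ω : Type*}

/-- The total weight of a path: the sum of the passage times of its edges. -/
def pathWeight (τ : Sym2 (V d) → Ω → ℝ) (ω : Ω) (p : List (V d)) : ℝ :=
  ((p.zip p.tail).map fun q => τ s(q.1, q.2) ω).sum

/-- The travel time between two vertices. -/
def T (τ : Sym2 (V d) → Ω → ℝ) (ω : Ω) (y z : V d) : ℝ :=
  sInf {c | ∃ p : List (V d), IsLatticePath p ∧ p.head? = some y ∧
    p.getLast? = some z ∧ pathWeight τ ω p = c}

/-- The travel time between two vertex sets (infimum over lattice paths from `A` to `B`). -/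
def TSet (τ : Sym2 (V d) → Ω → ℝ) (ω : Ω) (A B : Set (V d)) : ℝ :=
  sInf {c | ∃ p : List (V d), IsLatticePath p ∧ (∃ a ∈ A, p.head? = some a) ∧
    (∃ b ∈ B, p.getLast? = some b) ∧ pathWeight τ ω p = c}

/-- Point-to-set travel time `inf {T(y,z) : z ∈ A}`. -/
def TtoSet (τ : Sym2 (V d) → Ω → ℝ) (ω : Ω) (y : V d) (A : Set (V d)) : ℝ :=
  sInf {c | ∃ z ∈ A, T τ ω y z = c}

/-- The travel time between `A` and `B` restricted to paths all of whose vertices lie in `S`. -/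
def Tres (τ : Sym2 (V d) → Ω → ℝ) (ω : Ω) (S A B : Set (V d)) : ℝ :=
  sInf {c | ∃ p : List (V d), IsLatticePath p ∧ (∀ v ∈ p, v ∈ S) ∧
    (∃ a ∈ A, p.head? = some a) ∧ (∃ b ∈ B, p.getLast? = some b) ∧ pathWeight τ ω p = c}

/-- The standard basis vectors of the lattice. -/
def stdBasis (d : ℕ) (i : Fin d) : V d := fun j => if j = i then 1 else 0

/-- The minimum passage time among the `2d` edges incident to the origin. -/
def Ymin (τ : Sym2 (V d) → Ω → ℝ) (ω : Ω) : ℝ :=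
  sInf {x | ∃ i : Fin d, x = τ s(0, stdBasis d i) ω ∨ x = τ s(0, -stdBasis d i) ω}

/-- The passage times are measurable, nonnegative, independent and identically distributed. -/
def IID [MeasurableSpace Ω] (τ : Sym2 (V d) → Ω → ℝ) (P : Measure Ω) : Prop :=
  (∀ e, Measurable (τ e)) ∧ (∀ e ω, 0 ≤ τ e ω) ∧
    iIndepFun (fun e : EdgeSet d => τ e.1) P ∧
    ∀ e e' : EdgeSet d, IdentDistrib (τ e.1) (τ e'.1) P P

/-- `μZ` is the time constant: it is nonnegative and `T(0,nz)/n → μZ z` in probability. -/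
def IsTimeConstant [MeasurableSpace Ω] (τ : Sym2 (V d) → Ω → ℝ) (P : Measure Ω)
    (μZ : V d → ℝ) : Prop :=
  (∀ z, 0 ≤ μZ z) ∧
    ∀ z : V d, TendstoInMeasure P (fun (n : ℕ) ω => T τ ω 0 (n • z) / n) atTop fun _ => μZ z

/-- `E[Y^α]`, as a Lebesgue integral with values in `[0,∞]`. -/
def momY [MeasurableSpace Ω] (τ : Sym2 (V d) → Ω → ℝ) (P : Measure Ω) (α : ℝ) : ℝ≥0∞ :=
  ∫⁻ ω, ENNReal.ofReal (Ymin τ ω ^ α) ∂P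

/-- Embedding of the lattice into Euclidean space. -/
def toE {d : ℕ} (x : V d) : EuclideanSpace ℝ (Fin d) := WithLp.toLp 2 fun i => (x i : ℝ)

/-- The cylinder of Euclidean radius `r` around the line `ℝz`. -/
def cyl (z : V d) (r : ℝ) : Set (V d) :=
  {y | Metric.infDist (toE y) (Set.range fun a : ℝ => a • toE z) ≤ r}

/-- The hyperplane of vertices with coordinate sum `k`. -/
def Hplane (d : ℕ) (k : ℤ) : Set (V d) := {y | ∑ i, y i = k}

/-- The section `V_n(z,r)` of the cylinder. -/
def Vsec (z : V d) (r : ℝ) (n : ℕ) : Set (V d) := cyl z r ∩ Hplane d (n * norm1 z)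

/-- The set of edges `E_n(z,r)` joining `C(z,r) ∩ H_{n‖z‖-1}` to `C(z,r) ∩ H_{n‖z‖}`. -/
def Esec (z : V d) (r : ℝ) (n : ℕ) : Set (Sym2 (V d)) :=
  {e | ∃ a b : V d, e = s(a, b) ∧ dist1 a b = 1 ∧ a ∈ cyl z r ∧ b ∈ cyl z r ∧
    (∑ i, a i) = (n * norm1 z : ℕ) - 1 ∧ (∑ i, b i) = (n * norm1 z : ℕ)}

/-- The event `A_n(z,r)`: all edges of `E_n(z,r)` have passage time at most `tbar`. -/
def Asec (τ : Sym2 (V d) → Ω → ℝ) (z : V d) (r tbar : ℝ) (n : ℕ) (ω : Ω) : Prop :=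
  ∀ e ∈ Esec z r n, τ e ω ≤ tbar

/-- The regeneration times `ρ_j(z,r)`. -/
def rho (τ : Sym2 (V d) → Ω → ℝ) (z : V d) (r tbar : ℝ) (ω : Ω) : ℕ → ℕ
  | 0 => 0
  | j + 1 => sInf {n : ℕ | rho τ z r tbar ω j < n ∧ Asec τ z r tbar n ω}

/-- The cylinder time constant `μ_{C(z,r)} = lim E[T_{C(z,r)}(V_0,V_n)]/n`, in `[0,∞]`. -/
def muCyl [MeasurableSpace Ω] (τ : Sym2 (V d) → Ω → ℝ) (P : Measure Ω) (z : V d) (r : ℝ) :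
    ℝ≥0∞ :=
  atTop.liminf fun n : ℕ =>
    (∫⁻ ω, ENNReal.ofReal (Tres τ ω (cyl z r) (Vsec z r 0) (Vsec z r n)) ∂P) / n

/-- The set `Z_ε` of sites experiencing a linear order deviation. -/
def Zset (τ : Sym2 (V d) → Ω → ℝ) (μZ : V d → ℝ) (ε : ℝ) (ω : Ω) : Set (V d) :=
  {z | ε * norm1 z < |T τ ω 0 z - μZ z|}

/-- The ball `B_t` of sites reached from the origin by time `t`. -/
def Bt (τ : Sym2 (V d) → Ω → ℝ) (ω : Ω) (t : ℝ) : Set (V d) := {z | T τ ω 0 z ≤ t}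

/-- The discrete ball `B^μ_t` of the time constant. -/
def Bmu (μZ : V d → ℝ) (t : ℝ) : Set (V d) := {z | μZ z ≤ t}

/-- The set `T_ε` of times at which one of the shape theorem inclusions fails. -/
def TEps (τ : Sym2 (V d) → Ω → ℝ) (μZ : V d → ℝ) (ε : ℝ) (ω : Ω) : Set ℝ :=
  {t | 0 ≤ t ∧ (¬ Bmu μZ ((1 - ε) * t) ⊆ Bt τ ω t ∨ ¬ Bt τ ω t ⊆ Bmu μZ ((1 + ε) * t))}

end FPP

/-!
Write `r = L / K` and `F = E[(min_{i<K} τ_i)^α]`. Independence gives the tail identity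
`P(min_{i<L} τ_i > s) = P(min_{i<K} τ_i > s)^r`. By the layer cake formula,
`E[Y^β] = β ∫_0^∞ s^{β-1} P(Y > s) ds`, and the range `s ≤ 1` contributes at most `1`.
For `s > 1`, split `p^r = p · p^{r-1}` with `p = P(min_{i<K} τ_i > s)` and bound `p^{r-1}` by
Markov's inequality `s^α p ≤ F`; the condition `β K ≤ α L` is exactly what gives
`s^{β-1} s^{-α(r-1)} ≤ s^{α-1}`. What is left is `β F^{r-1} ∫_1^∞ s^{α-1} p(s) ds`, which the
layer cake formula for `F` bounds by `(β/α) F^r`.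
-/

open Set

theorem Finset.measurable_inf' {δ α ι : Type*} [MeasurableSpace δ] [MeasurableSpace α]
    [SemilatticeInf α] [MeasurableInf₂ α] {s : Finset ι} (hs : s.Nonempty) {f : ι → δ → α}
    (hf : ∀ i ∈ s, Measurable (f i)) : Measurable fun x => s.inf' hs fun i => f i x := by
  simp_rw [← Finset.inf'_apply]
  exact Finset.inf'_induction hs f (p := Measurable) (fun _ hf _ hg => hf.inf hg) hf

theorem csInf_setOf_exists_lt_eq_range_inf' {α : Type*} [ConditionallyCompleteLinearOrder α]
    (f : ℕ → α) {N : ℕ} (hN : (Finset.range N).Nonempty) :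
    sInf {x | ∃ i < N, x = f i} = (Finset.range N).inf' hN f := by
  rw [Finset.inf'_eq_csInf_image, Finset.coe_range]
  congr 1
  ext x
  simp [eq_comm]

theorem ENNReal.rpow_eq_mul_rpow_sub_one (x : ℝ≥0∞) {r : ℝ} (hr : 1 ≤ r) :
    x ^ r = x * x ^ (r - 1) := by
  conv_lhs => rw [← add_sub_cancel 1 r]
  rw [ENNReal.rpow_add_of_nonneg _ _ zero_le_one (by linarith), ENNReal.rpow_one]

theorem ENNReal.rpow_mul_ofReal_rpow_sub_one_le {p F : ℝ≥0∞} {s α β r : ℝ} (hs : 1 ≤ s)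
    (hr : 1 ≤ r) (hβr : β ≤ α * r) (hp : ENNReal.ofReal (s ^ α) * p ≤ F) :
    p ^ r * ENNReal.ofReal (s ^ (β - 1)) ≤ F ^ (r - 1) * (p * ENNReal.ofReal (s ^ (α - 1))) := by
  have hs0 : 0 < s := by linarith
  have hpow : s ^ (β - 1) ≤ s ^ (α - 1) * (s ^ α) ^ (r - 1) := by
    rw [← Real.rpow_mul hs0.le, ← Real.rpow_add hs0]
    exact Real.rpow_le_rpow_of_exponent_le hs (by nlinarith)
  calc p ^ r * ENNReal.ofReal (s ^ (β - 1))
      ≤ p * p ^ (r - 1) * (ENNReal.ofReal (s ^ (α - 1)) * ENNReal.ofReal (s ^ α) ^ (r - 1)) := by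
        rw [ENNReal.rpow_eq_mul_rpow_sub_one p hr,
          ENNReal.ofReal_rpow_of_nonneg (by positivity) (by linarith),
          ← ENNReal.ofReal_mul (by positivity)]
        gcongr
    _ = (ENNReal.ofReal (s ^ α) * p) ^ (r - 1) * (p * ENNReal.ofReal (s ^ (α - 1))) := by
        rw [ENNReal.mul_rpow_of_nonneg _ _ (by linarith)]
        ring
    _ ≤ F ^ (r - 1) * (p * ENNReal.ofReal (s ^ (α - 1))) := by gcongr

theorem ofReal_mul_setLIntegral_Ioc_zero_one_rpow_sub_one {p : ℝ} (hp : 0 < p) :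
    ENNReal.ofReal p * ∫⁻ t in Ioc (0 : ℝ) 1, ENNReal.ofReal (t ^ (p - 1)) = 1 := by
  have hint : IntegrableOn (fun t : ℝ => t ^ (p - 1)) (Ioc 0 1) :=
    (intervalIntegral.intervalIntegrable_rpow' (by linarith)).1
  have hnn : 0 ≤ᵐ[volume.restrict (Ioc (0 : ℝ) 1)] fun t => t ^ (p - 1) :=
    (ae_restrict_iff' measurableSet_Ioc).2 (ae_of_all _ fun t ht => Real.rpow_nonneg ht.1.le _)
  rw [← ofReal_integral_eq_lintegral_ofReal hint hnn,
    ← intervalIntegral.integral_of_le zero_le_one, integral_rpow (Or.inl (by linarith)),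
    sub_add_cancel, ← ENNReal.ofReal_mul hp.le]
  simp [Real.zero_rpow hp.ne', hp.ne']

section

variable {Ω : Type*} [MeasurableSpace Ω] {μ : Measure Ω}

theorem ofReal_rpow_mul_measure_lt_le_lintegral {f : Ω → ℝ} (hf : AEMeasurable f μ) {α s : ℝ}
    (hα : 0 ≤ α) (hs : 0 ≤ s) :
    ENNReal.ofReal (s ^ α) * μ {ω | s < f ω} ≤ ∫⁻ ω, ENNReal.ofReal (f ω ^ α) ∂μ := by
  refine le_trans ?_
    (mul_meas_ge_le_lintegral₀ (hf.pow_const α).ennreal_ofReal (ENNReal.ofReal (s ^ α)))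
  refine mul_le_mul_right (measure_mono fun ω (hω : s < f ω) => ?_) _
  exact ENNReal.ofReal_le_ofReal (Real.rpow_le_rpow hs hω.le hα)

theorem lintegral_rpow_le_one_add_of_measure_lt_le_rpow [IsProbabilityMeasure μ] {f g : Ω → ℝ}
    (hf_nn : 0 ≤ f) (hg_nn : 0 ≤ g) (hf : AEMeasurable f μ) (hg : AEMeasurable g μ)
    {α β r : ℝ} (hα : 0 < α) (hβ : 0 < β) (hr : 1 ≤ r) (hβr : β ≤ α * r)
    (htail : ∀ s, 1 < s → μ {ω | s < g ω} ≤ μ {ω | s < f ω} ^ r) :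
    ∫⁻ ω, ENNReal.ofReal (g ω ^ β) ∂μ ≤
      1 + ENNReal.ofReal (β / α) * (∫⁻ ω, ENNReal.ofReal (f ω ^ α) ∂μ) ^ r := by
  set F := ∫⁻ ω, ENNReal.ofReal (f ω ^ α) ∂μ
  set I := ∫⁻ s in Ioi 1, μ {ω | s < f ω} * ENNReal.ofReal (s ^ (α - 1))
  have hI : ENNReal.ofReal α * I ≤ F := by
    rw [show F = _ from lintegral_rpow_eq_lintegral_meas_lt_mul μ (ae_of_all _ hf_nn) hf hα]
    gcongr
    exact lintegral_mono_set (Ioi_subset_Ioi zero_le_one)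
  have hlow : ∫⁻ s in Ioc 0 1, μ {ω | s < g ω} * ENNReal.ofReal (s ^ (β - 1))
      ≤ ∫⁻ s in Ioc 0 1, ENNReal.ofReal (s ^ (β - 1)) :=
    lintegral_mono fun s => mul_le_of_le_one_left zero_le prob_le_one
  have hhigh : ∫⁻ s in Ioi 1, μ {ω | s < g ω} * ENNReal.ofReal (s ^ (β - 1))
      ≤ F ^ (r - 1) * I := by
    have hmeas : Measurable fun s : ℝ => μ {ω | s < f ω} * ENNReal.ofReal (s ^ (α - 1)) :=
      (Antitone.measurable fun a b hab => measure_mono fun ω (h : b < f ω) => hab.trans_lt h).mul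
        (by fun_prop)
    rw [← lintegral_const_mul _ hmeas]
    refine setLIntegral_mono' measurableSet_Ioi fun s (hs : 1 < s) => ?_
    calc μ {ω | s < g ω} * ENNReal.ofReal (s ^ (β - 1))
        ≤ μ {ω | s < f ω} ^ r * ENNReal.ofReal (s ^ (β - 1)) := by gcongr; exact htail s hs
      _ ≤ _ := ENNReal.rpow_mul_ofReal_rpow_sub_one_le hs.le hr hβr
          (ofReal_rpow_mul_measure_lt_le_lintegral hf hα.le (by linarith))
  have hβα : ENNReal.ofReal (β / α) * ENNReal.ofReal α = ENNReal.ofReal β := by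
    rw [← ENNReal.ofReal_mul (by positivity), div_mul_cancel₀ _ hα.ne']
  calc ∫⁻ ω, ENNReal.ofReal (g ω ^ β) ∂μ
      = ENNReal.ofReal β * ((∫⁻ s in Ioc 0 1, μ {ω | s < g ω} * ENNReal.ofReal (s ^ (β - 1)))
          + ∫⁻ s in Ioi 1, μ {ω | s < g ω} * ENNReal.ofReal (s ^ (β - 1))) := by
        rw [lintegral_rpow_eq_lintegral_meas_lt_mul μ (ae_of_all _ hg_nn) hg hβ,
          ← lintegral_union measurableSet_Ioi Ioc_disjoint_Ioi_same,
          Ioc_union_Ioi_eq_Ioi zero_le_one]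
    _ ≤ ENNReal.ofReal β * ((∫⁻ s in Ioc 0 1, ENNReal.ofReal (s ^ (β - 1))) + F ^ (r - 1) * I) := by
        gcongr
    _ = 1 + ENNReal.ofReal (β / α) * (F ^ (r - 1) * (ENNReal.ofReal α * I)) := by
        rw [mul_add, ofReal_mul_setLIntegral_Ioc_zero_one_rpow_sub_one hβ, ← hβα]
        ring
    _ ≤ 1 + ENNReal.ofReal (β / α) * F ^ r := by
        rw [ENNReal.rpow_eq_mul_rpow_sub_one F hr, mul_comm F]
        gcongr

theorem ProbabilityTheory.iIndepFun.measure_lt_range_inf'_eq_pow {τ : ℕ → Ω → ℝ}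
    (hindep : iIndepFun τ μ) (hident : ∀ i, IdentDistrib (τ i) (τ 0) μ μ) {N : ℕ}
    (hN : (Finset.range N).Nonempty) (s : ℝ) :
    μ {ω | s < (Finset.range N).inf' hN fun i => τ i ω} = μ {ω | s < τ 0 ω} ^ N := by
  have hset : {ω | s < (Finset.range N).inf' hN fun i => τ i ω}
      = ⋂ i ∈ Finset.range N, τ i ⁻¹' Ioi s := by
    ext ω
    simp [Finset.lt_inf'_iff]
  rw [hset, hindep.meas_biInter fun i _ => ⟨Ioi s, measurableSet_Ioi, rfl⟩,
    Finset.prod_congr rfl fun i _ => (hident i).measure_mem_eq measurableSet_Ioi,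
    Finset.prod_const, Finset.card_range]
  rfl

end

/-- **Lemma (moment comparison for minima).** For nonnegative i.i.d. `τ_i` and
`β K ≤ α L` with `1 ≤ K ≤ L`:
`E[(min_{i<L} τ_i)^β] ≤ 1 + (β/α) E[(min_{i<K} τ_i)^α]^{L/K}`. -/
theorem min_moment_comparison {Ω : Type*} [MeasurableSpace Ω]
    (P : Measure Ω) [IsProbabilityMeasure P]
    (τ : ℕ → Ω → ℝ) (hmeas : ∀ i, Measurable (τ i)) (h0 : ∀ i ω, 0 ≤ τ i ω)
    (hindep : ProbabilityTheory.iIndepFun τ P)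
    (hident : ∀ i j, ProbabilityTheory.IdentDistrib (τ i) (τ j) P P)
    (α β : ℝ) (hα : 0 < α) (hβ : 0 < β)
    (K L : ℕ) (hK : 1 ≤ K) (hKL : K ≤ L) (h : β * K ≤ α * L) :
    ∫⁻ ω, ENNReal.ofReal (sInf {x | ∃ i < L, x = τ i ω} ^ β) ∂P ≤
      1 + ENNReal.ofReal (β / α) *
        (∫⁻ ω, ENNReal.ofReal (sInf {x | ∃ i < K, x = τ i ω} ^ α) ∂P) ^ ((L : ℝ) / K) := by
  have hKne : (Finset.range K).Nonempty := Finset.nonempty_range_iff.2 (by omega)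
  have hLne : (Finset.range L).Nonempty := Finset.nonempty_range_iff.2 (by omega)
  have hK' : (0 : ℝ) < K := by exact_mod_cast hK
  have hmin_nn : ∀ N (hN : (Finset.range N).Nonempty),
      0 ≤ fun ω => (Finset.range N).inf' hN fun i => τ i ω :=
    fun _ _ ω => Finset.le_inf' _ _ fun i _ => h0 i ω
  simp only [csInf_setOf_exists_lt_eq_range_inf' _ hKne,
    csInf_setOf_exists_lt_eq_range_inf' _ hLne]
  refine lintegral_rpow_le_one_add_of_measure_lt_le_rpow (hmin_nn K hKne) (hmin_nn L hLne)
    (Finset.measurable_inf' hKne fun i _ => hmeas i).aemeasurable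
    (Finset.measurable_inf' hLne fun i _ => hmeas i).aemeasurable hα hβ
    ((one_le_div hK').2 (by exact_mod_cast hKL))
    (by rwa [mul_div_assoc', le_div_iff₀ hK']) fun s _ => le_of_eq ?_
  rw [hindep.measure_lt_range_inf'_eq_pow (hident · 0),
    hindep.measure_lt_range_inf'_eq_pow (hident · 0), ← ENNReal.rpow_natCast_mul,
    mul_div_cancel₀ _ hK'.ne', ENNReal.rpow_natCast]
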